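/- arXiv:1503.03980 — 4 statements merged into one kernel-verified Lean document; each statement's English description precedes it below -/
import Mathlib

section
/- Let φ : [0,2] → ℝ be twice continuously differentiable and let k ∈ (0,2) be such that φ''(t) < 0 for t ∈ [0,k) and φ''(t) > 0 for t ∈ (k,2]. Let β ∈ (0,1) satisfy φ(2β) − φ(β) = β·φ'(β). Then for every s ∈ [0,2β], φ(s) ≤ φ(β) + (s − β)·φ'(β). -/
open Set

/-! With `g = φ - (tangent line at β)` we have `g β = g' β = 0` and, by the choice of `β`,
`g (2β) = 0`; `g` is concave on `[0,k]` and strictly convex on `[k,2]`. A strictly convex function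
cannot have a critical point `β` and a later point `2β` at the same height, so `β < k`. Concavity
then makes `β` a maximum of `g` on `[0,k]`, and on `[k,2β]` convexity bounds `g` by
`max (g k) (g (2β)) ≤ 0`. -/

lemma ConcaveOn.le_of_hasDerivAt_eq_zero {S : Set ℝ} {f : ℝ → ℝ} {x y : ℝ} (hf : ConcaveOn ℝ S f)
    (hx : x ∈ S) (hy : y ∈ S) (hf' : HasDerivAt f 0 x) : f y ≤ f x := by
  rcases lt_trichotomy y x with hyx | rfl | hxy
  · have := hf.le_slope_of_hasDerivAt hy hx hyx hf'
    rw [slope_def_field, le_div_iff₀ (sub_pos.2 hyx)] at this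
    linarith
  · exact le_rfl
  · have := hf.slope_le_of_hasDerivAt hx hy hxy hf'
    rw [slope_def_field, div_le_iff₀ (sub_pos.2 hxy)] at this
    linarith

lemma strictConvexOn_of_hasDerivWithinAt2_pos {D : Set ℝ} (hD : Convex ℝ D) {f f' f'' : ℝ → ℝ}
    (hf : ContinuousOn f D) (hf' : ∀ x ∈ interior D, HasDerivWithinAt f (f' x) (interior D) x)
    (hf'' : ∀ x ∈ interior D, HasDerivWithinAt f' (f'' x) (interior D) x)
    (hf''₀ : ∀ x ∈ interior D, 0 < f'' x) : StrictConvexOn ℝ D f := by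
  have hf'_mono : StrictMonoOn f' (interior D) := by
    refine strictMonoOn_of_hasDerivWithinAt_pos (f := f') (f' := f'') hD.interior
      (fun x hx ↦ (hf'' x hx).continuousWithinAt) ?_ ?_ <;> rw [interior_interior]
    exacts [hf'', hf''₀]
  exact hf'_mono.congr (deriv_eqOn isOpen_interior hf').symm |>.strictConvexOn_of_deriv hD hf

section Icc

variable {T : Set ℝ} {f f' f'' : ℝ → ℝ} {a b : ℝ}
  (hf' : ∀ x ∈ T, HasDerivWithinAt f (f' x) T x) (hf'' : ∀ x ∈ T, HasDerivWithinAt f' (f'' x) T x)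
  (hab : Icc a b ⊆ T)
include hf' hf'' hab

lemma concaveOn_Icc_of_hasDerivWithinAt2_nonpos (hf''₀ : ∀ x ∈ Ioo a b, f'' x ≤ 0) :
    ConcaveOn ℝ (Icc a b) f := by
  have hint : interior (Icc a b) ⊆ T := interior_subset.trans hab
  refine concaveOn_of_hasDerivWithinAt2_nonpos (convex_Icc a b)
    (fun x hx ↦ (hf' x (hab hx)).continuousWithinAt.mono hab)
    (fun x hx ↦ (hf' x (hint hx)).mono hint) (fun x hx ↦ (hf'' x (hint hx)).mono hint) ?_
  rwa [interior_Icc]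

lemma strictConvexOn_Icc_of_hasDerivWithinAt2_pos (hf''₀ : ∀ x ∈ Ioo a b, 0 < f'' x) :
    StrictConvexOn ℝ (Icc a b) f := by
  have hint : interior (Icc a b) ⊆ T := interior_subset.trans hab
  refine strictConvexOn_of_hasDerivWithinAt2_pos (convex_Icc a b)
    (fun x hx ↦ (hf' x (hab hx)).continuousWithinAt.mono hab)
    (fun x hx ↦ (hf' x (hint hx)).mono hint) (fun x hx ↦ (hf'' x (hint hx)).mono hint) ?_
  rwa [interior_Icc]

end Icc

lemma nonpos_on_Icc_of_concaveOn_of_strictConvexOn {g : ℝ → ℝ} {a k b β c : ℝ}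
    (hcc : ConcaveOn ℝ (Icc a k) g) (hcv : StrictConvexOn ℝ (Icc k b) g)
    (haβ : a ≤ β) (hβc : β < c) (hcb : c ≤ b)
    (hg'β : HasDerivAt g 0 β) (hgβ : g β = 0) (hgc : g c = 0) :
    ∀ s ∈ Icc a c, g s ≤ 0 := by
  have hβk : β < k := by
    by_contra! hkβ
    have := hcv.lt_slope_of_hasDerivAt ⟨hkβ, by linarith⟩ ⟨by linarith, hcb⟩ hβc hg'β
    simp [slope_def_field, hgβ, hgc] at this
  have hconc : ∀ s ∈ Icc a k, g s ≤ 0 := fun s hs ↦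
    hgβ ▸ hcc.le_of_hasDerivAt_eq_zero ⟨haβ, hβk.le⟩ hs hg'β
  rintro s ⟨has, hsc⟩
  rcases le_total s k with hsk | hks
  · exact hconc s ⟨has, hsk⟩
  · calc g s ≤ max (g k) (g c) :=
          hcv.convexOn.le_max_of_mem_Icc ⟨le_rfl, by linarith⟩ ⟨by linarith, hcb⟩ ⟨hks, hsc⟩
      _ ≤ 0 := max_le (hconc k ⟨by linarith, le_rfl⟩) hgc.le

theorem stmt13_general (φ φ' φ'' : ℝ → ℝ)
    (hd1 : ∀ t ∈ Icc (0:ℝ) 2, HasDerivWithinAt φ (φ' t) (Icc 0 2) t)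
    (hd2 : ∀ t ∈ Icc (0:ℝ) 2, HasDerivWithinAt φ' (φ'' t) (Icc 0 2) t)
    (k : ℝ) (hk : k ∈ Ioo (0:ℝ) 2)
    (hconc : ∀ t ∈ Ico (0:ℝ) k, φ'' t < 0)
    (hconv : ∀ t ∈ Ioc k 2, 0 < φ'' t)
    (β : ℝ) (hβ : β ∈ Ioo (0:ℝ) 1)
    (hβeq : φ (2 * β) - φ β = β * φ' β)
    : ∀ s ∈ Icc (0:ℝ) (2 * β), φ s ≤ φ β + (s - β) * φ' β := by
  obtain ⟨hβ0, hβ1⟩ := hβ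
  set g : ℝ → ℝ := fun t ↦ φ t - (φ β + (t - β) * φ' β)
  have hg' : ∀ t ∈ Icc (0:ℝ) 2, HasDerivWithinAt g (φ' t - φ' β) (Icc 0 2) t := fun t ht ↦ by
    have := (hd1 t ht).sub
      ((((hasDerivWithinAt_id t _).sub_const β).mul_const (φ' β)).const_add (φ β))
    rwa [one_mul] at this
  have hg'' : ∀ t ∈ Icc (0:ℝ) 2, HasDerivWithinAt (φ' · - φ' β) (φ'' t) (Icc 0 2) t :=
    fun t ht ↦ (hd2 t ht).sub_const _
  have hcc : ConcaveOn ℝ (Icc 0 k) g :=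
    concaveOn_Icc_of_hasDerivWithinAt2_nonpos hg' hg'' (Icc_subset_Icc le_rfl hk.2.le)
      fun t ht ↦ (hconc t (Ioo_subset_Ico_self ht)).le
  have hcv : StrictConvexOn ℝ (Icc k 2) g :=
    strictConvexOn_Icc_of_hasDerivWithinAt2_pos hg' hg'' (Icc_subset_Icc hk.1.le le_rfl)
      fun t ht ↦ hconv t (Ioo_subset_Ioc_self ht)
  have hg'β : HasDerivAt g 0 β := by
    simpa using (hg' β ⟨hβ0.le, by linarith⟩).hasDerivAt (Icc_mem_nhds hβ0 (by linarith))
  intro s hs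
  have := nonpos_on_Icc_of_concaveOn_of_strictConvexOn hcc hcv hβ0.le (by linarith) (by linarith)
    hg'β (by simp [g]) (by simp only [g]; linarith) s hs
  simpa [g] using this

theorem stmt13 (φ φ' φ'' : ℝ → ℝ)
    (hd1 : ∀ t ∈ Icc (0:ℝ) 2, HasDerivWithinAt φ (φ' t) (Icc 0 2) t)
    (hd2 : ∀ t ∈ Icc (0:ℝ) 2, HasDerivWithinAt φ' (φ'' t) (Icc 0 2) t)
    (hc : ContinuousOn φ'' (Icc (0:ℝ) 2))
    (k : ℝ) (hk : k ∈ Ioo (0:ℝ) 2)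
    (hconc : ∀ t ∈ Ico (0:ℝ) k, φ'' t < 0)
    (hconv : ∀ t ∈ Ioc k 2, 0 < φ'' t)
    (β : ℝ) (hβ : β ∈ Ioo (0:ℝ) 1)
    (hβeq : φ (2 * β) - φ β = β * φ' β)
    : ∀ s ∈ Icc (0:ℝ) (2 * β), φ s ≤ φ β + (s - β) * φ' β :=
  stmt13_general φ φ' φ'' hd1 hd2 k hk hconc hconv β hβ hβeq
end

section
/- Let φ : [0,2] → ℝ be twice continuously differentiable and let k ∈ (0,2) be such that φ''(t) < 0 for t ∈ [0,k) and φ''(t) > 0 for t ∈ (k,2]. Let β ∈ (0,1) satisfy φ(2β) − φ(β) = β·φ'(β). Then for every x ∈ [0,β] and every ξ ∈ [β,1], φ(ξ + β) − x·φ'(β) − φ(β + ξ − x) ≥ 0. -/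
/-!
Put `c = φ'(β)` and `h t = φ t - c t`, so that `h' = φ' - c`, the hypothesis on `β` reads
`h (2β) = h β`, and the claim is `h (β + ξ - x) ≤ h (β + ξ)`. Because `φ'` decreases strictly up
to `k` and increases after it, `h' < 0` at some `v > β` forces `h' < 0` on all of `(β, v]`.
Hence if `h s < h t` for some `β ≤ t ≤ s`, then `h' < 0` somewhere in `(t, s)` and `h` is strictly
decreasing on `[β, t]`. With `t = 2β` this contradicts `h (2β) = h β`, so `h` does not drop to
the right of `2β`; in general it gives `h t ≤ h β = h (2β) ≤ h s`.
-/

open Set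

theorem strictAntiOn_Icc_of_hasDerivWithinAt_neg {f f' : ℝ → ℝ} {a b c d : ℝ}
    (hf : ∀ t ∈ Icc a b, HasDerivWithinAt f (f' t) (Icc a b) t) (hcd : Icc c d ⊆ Icc a b)
    (hneg : ∀ t ∈ Ioo c d, f' t < 0) : StrictAntiOn f (Icc c d) := by
  refine strictAntiOn_of_hasDerivWithinAt_neg (f' := f') (convex_Icc c d)
    (fun t ht => ((hf t (hcd ht)).mono hcd).continuousWithinAt) ?_ ?_ <;> rw [interior_Icc]
  · exact fun t ht => (hf t (hcd (Ioo_subset_Icc_self ht))).mono (Ioo_subset_Icc_self.trans hcd)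
  · exact hneg

theorem monotoneOn_Icc_of_hasDerivWithinAt_nonneg {f f' : ℝ → ℝ} {a b c d : ℝ}
    (hf : ∀ t ∈ Icc a b, HasDerivWithinAt f (f' t) (Icc a b) t) (hcd : Icc c d ⊆ Icc a b)
    (hnonneg : ∀ t ∈ Ioo c d, 0 ≤ f' t) : MonotoneOn f (Icc c d) := by
  refine monotoneOn_of_hasDerivWithinAt_nonneg (f' := f') (convex_Icc c d)
    (fun t ht => ((hf t (hcd ht)).mono hcd).continuousWithinAt) ?_ ?_ <;> rw [interior_Icc]
  · exact fun t ht => (hf t (hcd (Ioo_subset_Icc_self ht))).mono (Ioo_subset_Icc_self.trans hcd)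
  · exact hnonneg

theorem lt_of_strictAntiOn_of_monotoneOn {g : ℝ → ℝ} {a k b β w v : ℝ}
    (hanti : StrictAntiOn g (Icc a k)) (hmono : MonotoneOn g (Icc k b))
    (hβ : a ≤ β) (hβw : β < w) (hwv : w ≤ v) (hv : v ≤ b) (hgv : g v < g β) : g w < g β := by
  rcases le_or_gt w k with hwk | hkw
  · exact hanti ⟨hβ, hβw.le.trans hwk⟩ ⟨hβ.trans hβw.le, hwk⟩ hβw
  · exact (hmono ⟨hkw.le, hwv.trans hv⟩ ⟨hkw.le.trans hwv, hv⟩ hwv).trans_lt hgv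

section Tilt

variable {f g : ℝ → ℝ} {a k b β : ℝ}
  (hf : ∀ t ∈ Icc a b, HasDerivWithinAt f (g t) (Icc a b) t)
  (hanti : StrictAntiOn g (Icc a k)) (hmono : MonotoneOn g (Icc k b))

include hf in
theorem hasDerivWithinAt_sub_const_mul (c : ℝ) :
    ∀ t ∈ Icc a b, HasDerivWithinAt (fun u => f u - c * u) (g t - c) (Icc a b) t := fun t ht => by
  have hsub := (hf t ht).sub ((hasDerivWithinAt_id t (Icc a b)).const_mul c)
  rwa [mul_one] at hsub

include hf hanti hmono in
theorem strictAntiOn_sub_mul_of_lt {v : ℝ} (hβ : a ≤ β) (hv : v ≤ b)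
    (hgv : g v < g β) : StrictAntiOn (fun u => f u - g β * u) (Icc β v) :=
  strictAntiOn_Icc_of_hasDerivWithinAt_neg (hasDerivWithinAt_sub_const_mul hf (g β))
    (Icc_subset_Icc hβ hv) fun _ hw =>
      sub_neg.2 (lt_of_strictAntiOn_of_monotoneOn hanti hmono hβ hw.1 hw.2.le hv hgv)

include hf hanti hmono in
theorem strictAntiOn_sub_mul_of_sub_mul_lt {t s : ℝ} (hβ : a ≤ β) (hβt : β ≤ t) (hts : t ≤ s)
    (hs : s ≤ b) (hdrop : f s - g β * s < f t - g β * t) :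
    StrictAntiOn (fun u => f u - g β * u) (Icc β t) := by
  obtain ⟨v, hv, hgv⟩ : ∃ v ∈ Ioo t s, g v < g β := by
    by_contra! hnonneg
    exact hdrop.not_ge (monotoneOn_Icc_of_hasDerivWithinAt_nonneg
      (hasDerivWithinAt_sub_const_mul hf (g β)) (Icc_subset_Icc (hβ.trans hβt) hs)
      (fun w hw => sub_nonneg.2 (hnonneg w hw)) (left_mem_Icc.2 hts) (right_mem_Icc.2 hts) hts)
  exact (strictAntiOn_sub_mul_of_lt hf hanti hmono hβ (hv.2.le.trans hs) hgv).mono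
    (Icc_subset_Icc le_rfl hv.1.le)

include hf hanti hmono in
theorem sub_mul_le_sub_mul_of_two_mul_le (hβ : a ≤ β) (hβ0 : 0 < β)
    (hβeq : f (2 * β) - f β = β * g β) {t s : ℝ} (hβt : β ≤ t) (hts : t ≤ s)
    (h2βs : 2 * β ≤ s) (hs : s ≤ b) : f t - g β * t ≤ f s - g β * s := by
  have hflat : f (2 * β) - g β * (2 * β) = f β - g β * β := by linarith
  have hrise : f (2 * β) - g β * (2 * β) ≤ f s - g β * s := by
    by_contra! hdrop
    exact (strictAntiOn_sub_mul_of_sub_mul_lt hf hanti hmono hβ (by linarith) h2βs hs hdrop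
      (left_mem_Icc.2 (by linarith)) (right_mem_Icc.2 (by linarith)) (by linarith)).ne hflat
  by_contra! hdrop
  have hfall : f t - g β * t ≤ f β - g β * β :=
    (strictAntiOn_sub_mul_of_sub_mul_lt hf hanti hmono hβ hβt hts hs hdrop).antitoneOn
      (left_mem_Icc.2 hβt) (right_mem_Icc.2 hβt) hβt
  linarith

end Tilt

theorem stmt14_general (φ φ' φ'' : ℝ → ℝ)
    (hd1 : ∀ t ∈ Icc (0:ℝ) 2, HasDerivWithinAt φ (φ' t) (Icc 0 2) t)
    (hd2 : ∀ t ∈ Icc (0:ℝ) 2, HasDerivWithinAt φ' (φ'' t) (Icc 0 2) t)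
    (k : ℝ) (hk : k ∈ Ioo (0:ℝ) 2)
    (hconc : ∀ t ∈ Ico (0:ℝ) k, φ'' t < 0)
    (hconv : ∀ t ∈ Ioc k 2, 0 < φ'' t)
    (β : ℝ) (hβ : β ∈ Ioo (0:ℝ) 1)
    (hβeq : φ (2 * β) - φ β = β * φ' β)
    : ∀ x ∈ Icc (0:ℝ) β, ∀ ξ ∈ Icc β 1,
      0 ≤ φ (ξ + β) - x * φ' β - φ (β + ξ - x) := by
  intro x hx ξ hξ
  have hanti : StrictAntiOn φ' (Icc 0 k) :=
    strictAntiOn_Icc_of_hasDerivWithinAt_neg hd2 (Icc_subset_Icc le_rfl hk.2.le)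
      fun t ht => hconc t ⟨ht.1.le, ht.2⟩
  have hmono : MonotoneOn φ' (Icc k 2) :=
    monotoneOn_Icc_of_hasDerivWithinAt_nonneg hd2 (Icc_subset_Icc hk.1.le le_rfl)
      fun t ht => (hconv t ⟨ht.1, ht.2.le⟩).le
  have key := sub_mul_le_sub_mul_of_two_mul_le hd1 hanti hmono hβ.1.le hβ.1 hβeq
    (t := β + ξ - x) (s := β + ξ) (by linarith [hx.2, hξ.1]) (by linarith [hx.1])
    (by linarith [hξ.1]) (by linarith [hξ.2, hβ.2])
  rw [add_comm ξ]
  linarith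

theorem stmt14 (φ φ' φ'' : ℝ → ℝ)
    (hd1 : ∀ t ∈ Icc (0:ℝ) 2, HasDerivWithinAt φ (φ' t) (Icc 0 2) t)
    (hd2 : ∀ t ∈ Icc (0:ℝ) 2, HasDerivWithinAt φ' (φ'' t) (Icc 0 2) t)
    (hc : ContinuousOn φ'' (Icc (0:ℝ) 2))
    (k : ℝ) (hk : k ∈ Ioo (0:ℝ) 2)
    (hconc : ∀ t ∈ Ico (0:ℝ) k, φ'' t < 0)
    (hconv : ∀ t ∈ Ioc k 2, 0 < φ'' t)
    (β : ℝ) (hβ : β ∈ Ioo (0:ℝ) 1)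
    (hβeq : φ (2 * β) - φ β = β * φ' β)
    : ∀ x ∈ Icc (0:ℝ) β, ∀ ξ ∈ Icc β 1,
      0 ≤ φ (ξ + β) - x * φ' β - φ (β + ξ - x) :=
  stmt14_general φ φ' φ'' hd1 hd2 k hk hconc hconv β hβ hβeq
end

section
/- Let φ : [0,2] → ℝ be twice continuously differentiable and let k ∈ (0,2) be such that φ''(t) < 0 for t ∈ [0,k) and φ''(t) > 0 for t ∈ (k,2]. Let β ∈ (0,1) satisfy φ(2β) − φ(β) = β·φ'(β). Then for every x ∈ [β,1] and every ξ ∈ [0,β], φ(x + β) − φ(x + ξ) − (β − ξ)·φ'(β) ≥ 0. -/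
/-!
Write `H t = φ t - φ' β * t`, so that `H' = φ' - φ' β` and the hypothesis on `β` says
`H (2β) = H β`. Because `φ'` decreases on `[0, k]` and increases on `[k, 2]`, it is strictly
quasiconvex. Hence `H' < 0` on the whole of `(β, 2β)` if `φ' (2β) < φ' β`, which is
incompatible with `H (2β) = H β`; so `φ' β ≤ φ' (2β)`, and by quasiconvexity again
`H' ≥ 0` beyond `2β`. For `β ≤ a ≤ b` with `2β ≤ b`, either `H' ≥ 0` on `[a, b]`, or
`H' ≤ 0` on `[β, a]`, and then `H a ≤ H β = H (2β) ≤ H b`.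
-/

open Set

def StrictQuasiconvexOn (s : Set ℝ) (g : ℝ → ℝ) : Prop :=
  ∀ ⦃x⦄, x ∈ s → ∀ ⦃z⦄, z ∈ s → ∀ ⦃y⦄, x < y → y < z → g y < max (g x) (g z)

theorem strictQuasiconvexOn_Icc_of_strictAntiOn_of_strictMonoOn {g : ℝ → ℝ} {a b c : ℝ}
    (hanti : StrictAntiOn g (Icc a c)) (hmono : StrictMonoOn g (Icc c b)) :
    StrictQuasiconvexOn (Icc a b) g := by
  intro x hx z hz y hxy hyz
  rcases le_or_gt y c with hyc | hcy
  · exact lt_max_of_lt_left (hanti ⟨hx.1, hxy.le.trans hyc⟩ ⟨hx.1.trans hxy.le, hyc⟩ hxy)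
  · exact lt_max_of_lt_right (hmono ⟨hcy.le, hyz.le.trans hz.2⟩ ⟨hcy.le.trans hyz.le, hz.2⟩ hyz)

section DerivOnIcc

variable {φ φ' : ℝ → ℝ} {u v p q C : ℝ}

theorem continuousOn_of_hasDerivWithinAt_Icc
    (hd : ∀ t ∈ Icc u v, HasDerivWithinAt φ (φ' t) (Icc u v) t) (hup : u ≤ p) (hqv : q ≤ v) :
    ContinuousOn φ (Icc p q) :=
  fun t ht ↦ ((hd t (Icc_subset_Icc hup hqv ht)).continuousWithinAt).mono
    (Icc_subset_Icc hup hqv)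

theorem hasDerivAt_of_hasDerivWithinAt_Icc
    (hd : ∀ t ∈ Icc u v, HasDerivWithinAt φ (φ' t) (Icc u v) t) (hup : u ≤ p) (hqv : q ≤ v)
    {t : ℝ} (ht : t ∈ interior (Icc p q)) : HasDerivAt φ (φ' t) t := by
  rw [interior_Icc] at ht
  exact (hd t ⟨hup.trans ht.1.le, ht.2.le.trans hqv⟩).hasDerivAt
    (Icc_mem_nhds (hup.trans_lt ht.1) (ht.2.trans_le hqv))

theorem strictAntiOn_of_hasDerivWithinAt_Icc_neg
    (hd : ∀ t ∈ Icc u v, HasDerivWithinAt φ (φ' t) (Icc u v) t) (hup : u ≤ p) (hqv : q ≤ v)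
    (hneg : ∀ t ∈ Ioo p q, φ' t < 0) : StrictAntiOn φ (Icc p q) :=
  strictAntiOn_of_deriv_neg (convex_Icc p q) (continuousOn_of_hasDerivWithinAt_Icc hd hup hqv)
    fun t ht ↦ (hasDerivAt_of_hasDerivWithinAt_Icc hd hup hqv ht).deriv ▸
      hneg t (by rwa [interior_Icc] at ht)

theorem strictMonoOn_of_hasDerivWithinAt_Icc_pos
    (hd : ∀ t ∈ Icc u v, HasDerivWithinAt φ (φ' t) (Icc u v) t) (hup : u ≤ p) (hqv : q ≤ v)
    (hpos : ∀ t ∈ Ioo p q, 0 < φ' t) : StrictMonoOn φ (Icc p q) :=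
  strictMonoOn_of_deriv_pos (convex_Icc p q) (continuousOn_of_hasDerivWithinAt_Icc hd hup hqv)
    fun t ht ↦ (hasDerivAt_of_hasDerivWithinAt_Icc hd hup hqv ht).deriv ▸
      hpos t (by rwa [interior_Icc] at ht)

theorem mul_sub_le_sub_of_le_hasDerivWithinAt_Icc
    (hd : ∀ t ∈ Icc u v, HasDerivWithinAt φ (φ' t) (Icc u v) t) (hup : u ≤ p) (hpq : p ≤ q)
    (hqv : q ≤ v) (hC : ∀ t ∈ Ioo p q, C ≤ φ' t) : C * (q - p) ≤ φ q - φ p :=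
  (convex_Icc p q).mul_sub_le_image_sub_of_le_deriv
    (continuousOn_of_hasDerivWithinAt_Icc hd hup hqv)
    (fun t ht ↦ (hasDerivAt_of_hasDerivWithinAt_Icc hd hup hqv ht).differentiableAt
      |>.differentiableWithinAt)
    (fun t ht ↦ (hasDerivAt_of_hasDerivWithinAt_Icc hd hup hqv ht).deriv ▸
      hC t (by rwa [interior_Icc] at ht))
    p (left_mem_Icc.2 hpq) q (right_mem_Icc.2 hpq) hpq

theorem sub_le_mul_sub_of_hasDerivWithinAt_Icc_le
    (hd : ∀ t ∈ Icc u v, HasDerivWithinAt φ (φ' t) (Icc u v) t) (hup : u ≤ p) (hpq : p ≤ q)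
    (hqv : q ≤ v) (hC : ∀ t ∈ Ioo p q, φ' t ≤ C) : φ q - φ p ≤ C * (q - p) :=
  (convex_Icc p q).image_sub_le_mul_sub_of_deriv_le
    (continuousOn_of_hasDerivWithinAt_Icc hd hup hqv)
    (fun t ht ↦ (hasDerivAt_of_hasDerivWithinAt_Icc hd hup hqv ht).differentiableAt
      |>.differentiableWithinAt)
    (fun t ht ↦ (hasDerivAt_of_hasDerivWithinAt_Icc hd hup hqv ht).deriv ▸
      hC t (by rwa [interior_Icc] at ht))
    p (left_mem_Icc.2 hpq) q (right_mem_Icc.2 hpq) hpq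

theorem sub_lt_mul_sub_of_hasDerivWithinAt_Icc_lt
    (hd : ∀ t ∈ Icc u v, HasDerivWithinAt φ (φ' t) (Icc u v) t) (hup : u ≤ p) (hpq : p < q)
    (hqv : q ≤ v) (hC : ∀ t ∈ Ioo p q, φ' t < C) : φ q - φ p < C * (q - p) :=
  (convex_Icc p q).image_sub_lt_mul_sub_of_deriv_lt
    (continuousOn_of_hasDerivWithinAt_Icc hd hup hqv)
    (fun t ht ↦ (hasDerivAt_of_hasDerivWithinAt_Icc hd hup hqv ht).differentiableAt
      |>.differentiableWithinAt)
    (fun t ht ↦ (hasDerivAt_of_hasDerivWithinAt_Icc hd hup hqv ht).deriv ▸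
      hC t (by rwa [interior_Icc] at ht))
    p (left_mem_Icc.2 hpq.le) q (right_mem_Icc.2 hpq.le) hpq

theorem strictQuasiconvexOn_of_hasDerivWithinAt_Icc {k : ℝ}
    (hd : ∀ t ∈ Icc u v, HasDerivWithinAt φ (φ' t) (Icc u v) t) (hk : k ∈ Icc u v)
    (hneg : ∀ t ∈ Ioo u k, φ' t < 0) (hpos : ∀ t ∈ Ioo k v, 0 < φ' t) :
    StrictQuasiconvexOn (Icc u v) φ :=
  strictQuasiconvexOn_Icc_of_strictAntiOn_of_strictMonoOn
    (strictAntiOn_of_hasDerivWithinAt_Icc_neg hd le_rfl hk.2 hneg)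
    (strictMonoOn_of_hasDerivWithinAt_Icc_pos hd hk.1 le_rfl hpos)

end DerivOnIcc

namespace StrictQuasiconvexOn

variable {φ φ' : ℝ → ℝ} {u v β γ : ℝ}

theorem deriv_le_deriv_of_secant_eq (hq : StrictQuasiconvexOn (Icc u v) φ')
    (hd : ∀ t ∈ Icc u v, HasDerivWithinAt φ (φ' t) (Icc u v) t) (huβ : u ≤ β) (hβγ : β < γ)
    (hγv : γ ≤ v) (hsec : φ γ - φ β = φ' β * (γ - β)) : φ' β ≤ φ' γ := by
  by_contra! hγβ
  have hbelow : ∀ t ∈ Ioo β γ, φ' t < φ' β := fun t ht ↦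
    max_eq_left hγβ.le ▸ hq ⟨huβ, hβγ.le.trans hγv⟩ ⟨huβ.trans hβγ.le, hγv⟩ ht.1 ht.2
  exact (sub_lt_mul_sub_of_hasDerivWithinAt_Icc_lt hd huβ hβγ hγv hbelow).ne hsec

theorem deriv_lt_of_secant_eq (hq : StrictQuasiconvexOn (Icc u v) φ')
    (hd : ∀ t ∈ Icc u v, HasDerivWithinAt φ (φ' t) (Icc u v) t) (huβ : u ≤ β) (hβγ : β < γ)
    (hsec : φ γ - φ β = φ' β * (γ - β)) {t : ℝ} (hγt : γ < t) (htv : t ≤ v) :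
    φ' β < φ' t := by
  have hle := hq.deriv_le_deriv_of_secant_eq hd huβ hβγ (hγt.le.trans htv) hsec
  have hmax := hq ⟨huβ, hβγ.le.trans (hγt.le.trans htv)⟩ ⟨huβ.trans (hβγ.trans hγt).le, htv⟩ hβγ hγt
  rcases lt_max_iff.1 hmax with h | h
  · exact absurd h hle.not_gt
  · exact hle.trans_lt h

theorem deriv_mul_sub_le_sub_of_secant_eq (hq : StrictQuasiconvexOn (Icc u v) φ')
    (hd : ∀ t ∈ Icc u v, HasDerivWithinAt φ (φ' t) (Icc u v) t) (huβ : u ≤ β) (hβγ : β < γ)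
    (hsec : φ γ - φ β = φ' β * (γ - β)) {a b : ℝ} (hβa : β ≤ a) (hab : a ≤ b) (hγb : γ ≤ b)
    (hbv : b ≤ v) : φ' β * (b - a) ≤ φ b - φ a := by
  have hβ : β ∈ Icc u v := ⟨huβ, hβa.trans (hab.trans hbv)⟩
  rcases le_or_gt (φ' a) (φ' β) with ha | ha
  · have hβa_le : φ a - φ β ≤ φ' β * (a - β) :=
      sub_le_mul_sub_of_hasDerivWithinAt_Icc_le hd huβ hβa (hab.trans hbv) fun t ht ↦
        (max_eq_left ha ▸ hq hβ ⟨huβ.trans hβa, hab.trans hbv⟩ ht.1 ht.2).le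
    have hγb_ge : φ' β * (b - γ) ≤ φ b - φ γ :=
      mul_sub_le_sub_of_le_hasDerivWithinAt_Icc hd (huβ.trans hβγ.le) hγb hbv fun t ht ↦
        (hq.deriv_lt_of_secant_eq hd huβ hβγ hsec ht.1 (ht.2.le.trans hbv)).le
    linarith
  · have hβa' : β < a := hβa.lt_of_ne (by rintro rfl; exact lt_irrefl _ ha)
    refine mul_sub_le_sub_of_le_hasDerivWithinAt_Icc hd (huβ.trans hβa) hab hbv fun t ht ↦ ?_
    have hmax := hq hβ ⟨huβ.trans (hβa.trans ht.1.le), ht.2.le.trans hbv⟩ hβa' ht.1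
    rcases lt_max_iff.1 hmax with h | h
    · exact absurd h (lt_asymm ha)
    · exact (ha.trans h).le

end StrictQuasiconvexOn

theorem stmt15_general (φ φ' φ'' : ℝ → ℝ)
    (hd1 : ∀ t ∈ Icc (0:ℝ) 2, HasDerivWithinAt φ (φ' t) (Icc 0 2) t)
    (hd2 : ∀ t ∈ Icc (0:ℝ) 2, HasDerivWithinAt φ' (φ'' t) (Icc 0 2) t)
    (k : ℝ) (hk : k ∈ Ioo (0:ℝ) 2)
    (hconc : ∀ t ∈ Ico (0:ℝ) k, φ'' t < 0)
    (hconv : ∀ t ∈ Ioc k 2, 0 < φ'' t)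
    (β : ℝ) (hβ : β ∈ Ioo (0:ℝ) 1)
    (hβeq : φ (2 * β) - φ β = β * φ' β)
    : ∀ x ∈ Icc β 1, ∀ ξ ∈ Icc (0:ℝ) β,
      0 ≤ φ (x + β) - φ (x + ξ) - (β - ξ) * φ' β := by
  rintro x ⟨hβx, hx1⟩ ξ ⟨hξ0, hξβ⟩
  obtain ⟨hβ0, hβ1⟩ := hβ
  have hq : StrictQuasiconvexOn (Icc 0 2) φ' :=
    strictQuasiconvexOn_of_hasDerivWithinAt_Icc hd2 (Ioo_subset_Icc_self hk)
      (fun t ht ↦ hconc t (Ioo_subset_Ico_self ht)) (fun t ht ↦ hconv t (Ioo_subset_Ioc_self ht))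
  have hsec : φ (2 * β) - φ β = φ' β * (2 * β - β) := by rw [hβeq]; ring
  have key : φ' β * ((x + β) - (x + ξ)) ≤ φ (x + β) - φ (x + ξ) :=
    hq.deriv_mul_sub_le_sub_of_secant_eq hd1 hβ0.le (by linarith) hsec
      (by linarith) (by linarith) (by linarith) (by linarith)
  linarith

theorem stmt15 (φ φ' φ'' : ℝ → ℝ)
    (hd1 : ∀ t ∈ Icc (0:ℝ) 2, HasDerivWithinAt φ (φ' t) (Icc 0 2) t)
    (hd2 : ∀ t ∈ Icc (0:ℝ) 2, HasDerivWithinAt φ' (φ'' t) (Icc 0 2) t)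
    (hc : ContinuousOn φ'' (Icc (0:ℝ) 2))
    (k : ℝ) (hk : k ∈ Ioo (0:ℝ) 2)
    (hconc : ∀ t ∈ Ico (0:ℝ) k, φ'' t < 0)
    (hconv : ∀ t ∈ Ioc k 2, 0 < φ'' t)
    (β : ℝ) (hβ : β ∈ Ioo (0:ℝ) 1)
    (hβeq : φ (2 * β) - φ β = β * φ' β)
    : ∀ x ∈ Icc β 1, ∀ ξ ∈ Icc (0:ℝ) β,
      0 ≤ φ (x + β) - φ (x + ξ) - (β - ξ) * φ' β :=
  stmt15_general φ φ' φ'' hd1 hd2 k hk hconc hconv β hβ hβeq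
end

section
/- Let β ∈ (0,1) satisfy sin(2πβ) − sin(πβ) = βπ·cos(πβ), and define Γ : [0,1] → [0,1] by Γ(x) = β − x for x ∈ [0,β) and Γ(x) = x for x ∈ [β,1]. Then the pushforward π* of Lebesgue measure on [0,1] under x ↦ (x, Γ(x)) is a doubly stochastic measure on [0,1]², and for every doubly stochastic measure π on [0,1]², ∫ sin(π(x+y)) dπ(x,y) ≤ ∫ sin(π(x+y)) dπ*(x,y) = ∫₀¹ sin(π(x + Γ(x))) dx. -/
open MeasureTheory Set Real

/-- A doubly stochastic measure on `[0,1]²`. -/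
def IsDoublyStochastic (μ : Measure (ℝ × ℝ)) : Prop :=
  IsProbabilityMeasure μ ∧
  (∀ B : Set ℝ, MeasurableSet B → B ⊆ Icc 0 1 → μ (B ×ˢ Icc (0:ℝ) 1) = volume B) ∧
  (∀ B : Set ℝ, MeasurableSet B → B ⊆ Icc 0 1 → μ (Icc (0:ℝ) 1 ×ˢ B) = volume B)

/-! Kantorovich duality with an explicit potential `φ`: `sin (π (x + y)) ≤ φ x + φ y` on `[0,1]²`,
with equality on the graph of `Γ`. Integrating against any doubly stochastic `π` gives
`∫ c dπ ≤ 2 ∫ φ = ∫ c dπ*`, since both marginals are Lebesgue measure and `Γ` preserves it.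

The pointwise inequality comes down to the shape of `tangentGap β s = π cos (π β) s - sin (π s)`:
it decreases on `[0, β]`, increases on `[β, 2 - β]` and decreases on `[2 - β, 2]`, while the
equation defining `β` says exactly `tangentGap β (2β) = tangentGap β β`. In particular `β > 2/3`, which makes
`sin (2π y) - 2 sin (π y)` increasing on `[β, 1]`. -/

lemma cos_pi_mul_two_sub (s : ℝ) : cos (π * (2 - s)) = cos (π * s) := by
  rw [mul_sub, mul_comm π 2, cos_two_pi_sub]

lemma cos_pi_mul_le_cos_pi_mul_of_mem_Icc {β s : ℝ} (hβ : β ≤ 1) (hs : s ∈ Icc 0 β) :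
    cos (π * β) ≤ cos (π * s) :=
  cos_le_cos_of_nonneg_of_le_pi (mul_nonneg pi_pos.le hs.1) (mul_le_of_le_one_right pi_pos.le hβ)
    (mul_le_mul_of_nonneg_left hs.2 pi_pos.le)

lemma cos_pi_mul_le_cos_pi_mul_of_mem_Icc_two_sub {β s : ℝ} (hβ : β ≤ 1) (hs : s ∈ Icc (2 - β) 2) :
    cos (π * β) ≤ cos (π * s) := by
  rw [← cos_pi_mul_two_sub s]
  exact cos_pi_mul_le_cos_pi_mul_of_mem_Icc hβ ⟨by linarith [hs.2], by linarith [hs.1]⟩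

lemma cos_pi_mul_lt_cos_pi_mul_of_mem_Ioo {β s : ℝ} (hβ : 0 ≤ β) (hs : s ∈ Ioo β (2 - β)) :
    cos (π * s) < cos (π * β) := by
  have key : ∀ t, β < t → t ≤ 1 → cos (π * t) < cos (π * β) := fun t hβt ht1 =>
    cos_lt_cos_of_nonneg_of_le_pi (mul_nonneg pi_pos.le hβ) (mul_le_of_le_one_right pi_pos.le ht1)
      (mul_lt_mul_of_pos_left hβt pi_pos)
  rcases le_total s 1 with hs1 | hs1
  · exact key s hs.1 hs1
  · rw [← cos_pi_mul_two_sub s]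
    exact key (2 - s) (by linarith [hs.2]) (by linarith)

/-- Up to an additive constant, the tangent line of `sin (π ·)` at `β` minus `sin (π ·)`. -/
noncomputable def tangentGap (β s : ℝ) : ℝ := π * cos (π * β) * s - sin (π * s)

lemma hasDerivAt_tangentGap (β s : ℝ) :
    HasDerivAt (tangentGap β) (π * (cos (π * β) - cos (π * s))) s :=
  (((hasDerivAt_id s).const_mul (π * cos (π * β))).fun_sub
    ((hasDerivAt_id s).const_mul π).sin).congr_deriv (by simp only [id, mul_one]; ring)

lemma continuous_tangentGap (β : ℝ) : Continuous (tangentGap β) :=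
  continuous_iff_continuousAt.2 fun s => (hasDerivAt_tangentGap β s).continuousAt

lemma tangentGap_antitoneOn_Icc_zero {β : ℝ} (hβ : β ≤ 1) :
    AntitoneOn (tangentGap β) (Icc 0 β) := by
  refine antitoneOn_of_hasDerivWithinAt_nonpos (convex_Icc 0 β)
    (continuous_tangentGap β).continuousOn
    (fun s _ => (hasDerivAt_tangentGap β s).hasDerivWithinAt) fun s hs => ?_
  rw [interior_Icc] at hs
  nlinarith [pi_pos, cos_pi_mul_le_cos_pi_mul_of_mem_Icc hβ (Ioo_subset_Icc_self hs)]

lemma tangentGap_strictMonoOn_Icc {β : ℝ} (hβ : 0 ≤ β) :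
    StrictMonoOn (tangentGap β) (Icc β (2 - β)) := by
  refine strictMonoOn_of_hasDerivWithinAt_pos (convex_Icc β (2 - β))
    (continuous_tangentGap β).continuousOn
    (fun s _ => (hasDerivAt_tangentGap β s).hasDerivWithinAt) fun s hs => ?_
  rw [interior_Icc] at hs
  nlinarith [pi_pos, cos_pi_mul_lt_cos_pi_mul_of_mem_Ioo hβ hs]

lemma tangentGap_antitoneOn_Icc_two_sub {β : ℝ} (hβ : β ≤ 1) :
    AntitoneOn (tangentGap β) (Icc (2 - β) 2) := by
  refine antitoneOn_of_hasDerivWithinAt_nonpos (convex_Icc (2 - β) 2)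
    (continuous_tangentGap β).continuousOn
    (fun s _ => (hasDerivAt_tangentGap β s).hasDerivWithinAt) fun s hs => ?_
  rw [interior_Icc] at hs
  nlinarith [pi_pos, cos_pi_mul_le_cos_pi_mul_of_mem_Icc_two_sub hβ (Ioo_subset_Icc_self hs)]

section OptimalityCondition

variable {β : ℝ}

lemma tangentGap_two_mul
    (hβeq : sin (2 * π * β) - sin (π * β) = β * π * cos (π * β)) :
    tangentGap β (2 * β) = tangentGap β β := by
  simp only [tangentGap, show π * (2 * β) = 2 * π * β by ring]
  linarith

lemma two_thirds_lt (hβ : β ∈ Ioo 0 1)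
    (hβeq : sin (2 * π * β) - sin (π * β) = β * π * cos (π * β)) : 2 / 3 < β := by
  by_contra! h
  have := tangentGap_strictMonoOn_Icc hβ.1.le ⟨le_rfl, by linarith [hβ.2]⟩
    ⟨by linarith [hβ.1], by linarith⟩ (by linarith [hβ.1] : β < 2 * β)
  linarith [tangentGap_two_mul hβeq]

lemma tangentGap_self_le_of_mem_Icc (hβ : β ∈ Ioo 0 1)
    (hβeq : sin (2 * π * β) - sin (π * β) = β * π * cos (π * β)) {s : ℝ}
    (hs : s ∈ Icc 0 (2 * β)) : tangentGap β β ≤ tangentGap β s := by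
  obtain ⟨hβ0, hβ1⟩ := hβ
  rcases le_total s β with h₁ | h₁
  · exact tangentGap_antitoneOn_Icc_zero hβ1.le ⟨hs.1, h₁⟩ ⟨hβ0.le, le_rfl⟩ h₁
  rcases le_total s (2 - β) with h₂ | h₂
  · exact (tangentGap_strictMonoOn_Icc hβ0.le).monotoneOn ⟨le_rfl, by linarith⟩ ⟨h₁, h₂⟩ h₁
  · rw [← tangentGap_two_mul hβeq]
    exact tangentGap_antitoneOn_Icc_two_sub hβ1.le ⟨h₂, by linarith [hs.2]⟩
      ⟨by linarith [hs.2], by linarith⟩ hs.2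

end OptimalityCondition

lemma sin_pi_mul_add_le_of_one_le_of_le_two {x y : ℝ} (h₁ : 1 ≤ x + y) (h₂ : x + y ≤ 2) :
    sin (π * (x + y)) ≤ sin (2 * π * x) / 2 + sin (2 * π * y) / 2 := by
  have hsum : sin (2 * π * x) / 2 + sin (2 * π * y) / 2
      = sin (π * (x + y)) * cos (π * (x - y)) := by
    rw [show 2 * π * x = π * (x + y) + π * (x - y) by ring,
      show 2 * π * y = π * (x + y) - π * (x - y) by ring, sin_add, sin_sub]
    ring
  have hneg : sin (π * (x + y)) ≤ 0 := by
    rw [show π * (x + y) = π * (x + y - 1) + π by ring, sin_add_pi, neg_nonpos]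
    exact sin_nonneg_of_nonneg_of_le_pi (by nlinarith [pi_pos]) (by nlinarith [pi_pos])
  rw [hsum]
  nlinarith [cos_le_one (π * (x - y))]

lemma monotoneOn_sin_two_pi_mul_sub_two_sin :
    MonotoneOn (fun y => sin (2 * π * y) - 2 * sin (π * y)) (Icc (2 / 3) 1) := by
  have hderiv : ∀ y : ℝ, HasDerivAt (fun y => sin (2 * π * y) - 2 * sin (π * y))
      (2 * π * ((2 * cos (π * y) + 1) * (cos (π * y) - 1))) y := by
    intro y
    refine ((((hasDerivAt_id y).const_mul (2 * π)).sin).fun_sub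
      (((hasDerivAt_id y).const_mul π).sin.const_mul 2)).congr_deriv ?_
    simp only [id, mul_one]
    rw [show 2 * π * y = 2 * (π * y) by ring, cos_two_mul]
    ring
  refine monotoneOn_of_hasDerivWithinAt_nonneg (convex_Icc _ _)
    (continuous_iff_continuousAt.2 fun y => (hderiv y).continuousAt).continuousOn
    (fun y _ => (hderiv y).hasDerivWithinAt) fun y hy => ?_
  rw [interior_Icc] at hy
  have hcos : cos (π * y) < -(1 / 2) := by
    rw [← cos_pi_div_three, ← cos_pi_sub]
    exact cos_lt_cos_of_nonneg_of_le_pi (by linarith [pi_pos]) (by nlinarith [pi_pos, hy.2])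
      (by nlinarith [pi_pos, hy.1])
  have := mul_nonneg_of_nonpos_of_nonpos (by linarith : 2 * cos (π * y) + 1 ≤ 0)
    (by linarith [cos_le_one (π * y)] : cos (π * y) - 1 ≤ 0)
  positivity

/-- The Kantorovich potential. Where `Γ` is the identity it is `c(x, x) / 2`; on `[0, β)` it is
affine with the slope `π cos (π β)` of `c(·, y)` along the antidiagonal `x + y = β`, normalised
so that `φ x + φ (β - x) = sin (π β)`. -/
noncomputable def potential (β x : ℝ) : ℝ :=
  if x < β then π * cos (π * β) * x - tangentGap β β / 2 else sin (2 * π * x) / 2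

noncomputable def reflectBelow (β x : ℝ) : ℝ := if x < β then β - x else x

section Potential

variable {β : ℝ}

lemma potential_of_lt {x : ℝ} (hx : x < β) :
    potential β x = π * cos (π * β) * x - tangentGap β β / 2 :=
  if_pos hx

lemma potential_of_le {x : ℝ} (hx : β ≤ x) : potential β x = sin (2 * π * x) / 2 :=
  if_neg hx.not_gt

lemma sin_pi_mul_add_le_potential_add_of_lt_of_le (hβ : β ∈ Ioo 0 1)
    (hβeq : sin (2 * π * β) - sin (π * β) = β * π * cos (π * β)) {x y : ℝ}
    (hx₀ : 0 ≤ x) (hxβ : x < β) (hyβ : β ≤ y) (hy₁ : y ≤ 1) :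
    sin (π * (x + y)) ≤ potential β x + potential β y := by
  obtain ⟨hβ₀, hβ₁⟩ := hβ
  have hβ23 := two_thirds_lt ⟨hβ₀, hβ₁⟩ hβeq
  rw [potential_of_lt hxβ, potential_of_le hyβ]
  rcases le_total (x + y) (2 - β) with h | h
  · have hgap := (tangentGap_strictMonoOn_Icc hβ₀.le).monotoneOn ⟨hyβ, by linarith⟩ ⟨by linarith, h⟩
      (by linarith : y ≤ x + y)
    -- by `hβeq`, `sin (2πβ) - 2 sin (πβ) = tangentGap β β`, the constant term of `potential β x`
    have hk := monotoneOn_sin_two_pi_mul_sub_two_sin ⟨hβ23.le, hβ₁.le⟩ ⟨by linarith, hy₁⟩ hyβ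
    unfold tangentGap at hgap ⊢
    linarith
  · have hgap := tangentGap_antitoneOn_Icc_two_sub hβ₁.le ⟨h, by linarith⟩
      ⟨by linarith, by linarith⟩
      (by linarith : x + y ≤ β + y)
    -- moving `x` up to `β` lands in the region where the diagonal bound applies
    have hdiag := sin_pi_mul_add_le_of_one_le_of_le_two (x := β) (y := y) (by linarith)
      (by linarith)
    unfold tangentGap at hgap ⊢
    linarith

lemma sin_pi_mul_add_le_potential_add (hβ : β ∈ Ioo 0 1)
    (hβeq : sin (2 * π * β) - sin (π * β) = β * π * cos (π * β)) {x y : ℝ}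
    (hx : x ∈ Icc 0 1) (hy : y ∈ Icc 0 1) :
    sin (π * (x + y)) ≤ potential β x + potential β y := by
  have hβ23 := two_thirds_lt hβ hβeq
  rcases lt_or_ge x β with hxβ | hxβ <;> rcases lt_or_ge y β with hyβ | hyβ
  · have hgap := tangentGap_self_le_of_mem_Icc hβ hβeq ⟨add_nonneg hx.1 hy.1, by linarith⟩
    rw [potential_of_lt hxβ, potential_of_lt hyβ]
    unfold tangentGap at hgap ⊢
    linarith
  · exact sin_pi_mul_add_le_potential_add_of_lt_of_le hβ hβeq hx.1 hxβ hyβ hy.2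
  · rw [add_comm x, add_comm (potential β x)]
    exact sin_pi_mul_add_le_potential_add_of_lt_of_le hβ hβeq hy.1 hyβ hxβ hx.2
  · rw [potential_of_le hxβ, potential_of_le hyβ]
    exact sin_pi_mul_add_le_of_one_le_of_le_two (by linarith) (by linarith [hx.2, hy.2])

lemma potential_add_potential_reflectBelow
    (hβeq : sin (2 * π * β) - sin (π * β) = β * π * cos (π * β)) {x : ℝ} (hx : 0 ≤ x) :
    potential β x + potential β (reflectBelow β x) = sin (π * (x + reflectBelow β x)) := by
  rcases lt_or_ge x β with hxβ | hxβ
  · rw [reflectBelow, if_pos hxβ, add_sub_cancel, potential_of_lt hxβ]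
    rcases hx.eq_or_lt with rfl | hx₀
    -- `reflectBelow β 0 = β` falls in the upper branch of `potential`
    · rw [sub_zero, potential_of_le le_rfl]
      unfold tangentGap
      linarith
    · rw [potential_of_lt (by linarith : β - x < β)]
      unfold tangentGap
      ring
  · rw [reflectBelow, if_neg hxβ.not_gt, potential_of_le hxβ]
    ring_nf

@[fun_prop]
lemma measurable_potential (β : ℝ) : Measurable (potential β) :=
  Measurable.ite measurableSet_Iio (by fun_prop) (by fun_prop)

lemma integrable_potential (β : ℝ) : Integrable (potential β) (volume.restrict (Icc 0 1)) :=
  Integrable.piecewise (s := Iio β) measurableSet_Iio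
    (Continuous.integrableOn_Icc (by fun_prop)).integrableOn
    (Continuous.integrableOn_Icc (by fun_prop)).integrableOn

@[fun_prop]
lemma measurable_reflectBelow (β : ℝ) : Measurable (reflectBelow β) :=
  Measurable.ite measurableSet_Iio (by fun_prop) measurable_id

lemma measurePreserving_reflectBelow (hβ : β ∈ Icc 0 1) :
    MeasurePreserving (reflectBelow β) (volume.restrict (Icc 0 1)) (volume.restrict (Icc 0 1)) := by
  refine ⟨measurable_reflectBelow β, ?_⟩
  have hlow : (volume.restrict (Ico 0 β)).map (reflectBelow β) = volume.restrict (Ico 0 β) := by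
    have hpre : (β - ·) ⁻¹' Ioc 0 β = Ico 0 β := by
      ext x
      simp only [mem_preimage, mem_Ioc, mem_Ico]
      constructor <;> rintro ⟨h₁, h₂⟩ <;> constructor <;> linarith
    have hreflect : reflectBelow β =ᵐ[volume.restrict (Ico 0 β)] (β - ·) := by
      filter_upwards [ae_restrict_mem measurableSet_Ico] with x hx using if_pos hx.2
    rw [Measure.map_congr hreflect, ← hpre,
      ((Measure.measurePreserving_sub_left volume β).restrict_preimage measurableSet_Ioc).map_eq,
      hpre, Measure.restrict_congr_set Ico_ae_eq_Ioc]
  have hhigh : (volume.restrict (Icc β 1)).map (reflectBelow β) = volume.restrict (Icc β 1) := by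
    have hreflect : reflectBelow β =ᵐ[volume.restrict (Icc β 1)] id := by
      filter_upwards [ae_restrict_mem measurableSet_Icc] with x hx using if_neg hx.1.not_gt
    rw [Measure.map_congr hreflect, Measure.map_id]
  rw [← Ico_union_Icc_eq_Icc hβ.1 hβ.2,
    Measure.restrict_union ((Iio_disjoint_Ici le_rfl).mono Ico_subset_Iio_self Icc_subset_Ici_self)
      measurableSet_Icc,
    Measure.map_add _ _ (measurable_reflectBelow β), hlow, hhigh]

end Potential

section Marginals

variable {α γ : Type*} [MeasurableSpace α] [MeasurableSpace γ]

lemma integral_add_comp_fst_snd (μ : Measure (α × γ)) {f : α → ℝ} {g : γ → ℝ}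
    (hf : Integrable f (μ.map Prod.fst)) (hg : Integrable g (μ.map Prod.snd)) :
    ∫ p, (f p.1 + g p.2) ∂μ = ∫ x, f x ∂μ.map Prod.fst + ∫ y, g y ∂μ.map Prod.snd := by
  rw [integral_add (f := fun p : α × γ => f p.1) (g := fun p : α × γ => g p.2)
      (hf.comp_measurable measurable_fst)
      (hg.comp_measurable measurable_snd),
    integral_map measurable_fst.aemeasurable hf.1, integral_map measurable_snd.aemeasurable hg.1]

lemma integral_le_integral_map_fst_add_integral_map_snd {μ : Measure (α × γ)} {c : α × γ → ℝ}
    {f : α → ℝ} {g : γ → ℝ} (hc : Integrable c μ) (hf : Integrable f (μ.map Prod.fst))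
    (hg : Integrable g (μ.map Prod.snd)) (hle : ∀ᵐ p ∂μ, c p ≤ f p.1 + g p.2) :
    ∫ p, c p ∂μ ≤ ∫ x, f x ∂μ.map Prod.fst + ∫ y, g y ∂μ.map Prod.snd :=
  (integral_mono_ae hc
    ((hf.comp_measurable measurable_fst).add (hg.comp_measurable measurable_snd)) hle).trans_eq
    (integral_add_comp_fst_snd μ hf hg)

lemma integral_eq_integral_map_fst_add_integral_map_snd {μ : Measure (α × γ)} {c : α × γ → ℝ}
    {f : α → ℝ} {g : γ → ℝ} (hf : Integrable f (μ.map Prod.fst))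
    (hg : Integrable g (μ.map Prod.snd)) (heq : ∀ᵐ p ∂μ, c p = f p.1 + g p.2) :
    ∫ p, c p ∂μ = ∫ x, f x ∂μ.map Prod.fst + ∫ y, g y ∂μ.map Prod.snd :=
  (integral_congr_ae heq).trans (integral_add_comp_fst_snd μ hf hg)

end Marginals

lemma isDoublyStochastic_iff_map (μ : Measure (ℝ × ℝ)) :
    IsDoublyStochastic μ ↔ μ.map Prod.fst = volume.restrict (Icc 0 1) ∧
      μ.map Prod.snd = volume.restrict (Icc 0 1) := by
  set I : Set ℝ := Icc 0 1
  constructor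
  · rintro ⟨hprob, hfst, hsnd⟩
    have hsquare : μ (I ×ˢ I)ᶜ = 0 := by
      rw [prob_compl_eq_zero_iff (measurableSet_Icc.prod measurableSet_Icc),
        hfst I measurableSet_Icc subset_rfl, Real.volume_Icc, sub_zero, ENNReal.ofReal_one]
    constructor <;> ext B hB <;>
      rw [Measure.map_apply (by fun_prop) hB, Measure.restrict_apply hB,
        ← measure_inter_conull hsquare]
    · rw [← hfst _ (hB.inter measurableSet_Icc) inter_subset_right]
      congr 1
      ext p
      simp only [mem_inter_iff, mem_preimage, mem_prod]
      tauto
    · rw [← hsnd _ (hB.inter measurableSet_Icc) inter_subset_right]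
      congr 1
      ext p
      simp only [mem_inter_iff, mem_preimage, mem_prod]
      tauto
  · rintro ⟨hfst, hsnd⟩
    have hpre : ∀ {f : ℝ × ℝ → ℝ}, Measurable f → μ.map f = volume.restrict I →
        ∀ B, MeasurableSet B → μ (f ⁻¹' B) = volume (B ∩ I) := fun hf h B hB => by
      rw [← Measure.map_apply hf hB, h, Measure.restrict_apply hB]
    have hconull : ∀ {f : ℝ × ℝ → ℝ}, Measurable f → μ.map f = volume.restrict I →
        μ (f ⁻¹' I)ᶜ = 0 := fun hf h => by
      rw [← preimage_compl, hpre hf h _ measurableSet_Icc.compl, compl_inter_self, measure_empty]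
    refine ⟨⟨?_⟩, fun B hB hBI => ?_, fun B hB hBI => ?_⟩
    · rw [← preimage_univ (f := Prod.fst), hpre measurable_fst hfst _ MeasurableSet.univ,
        univ_inter, Real.volume_Icc, sub_zero, ENNReal.ofReal_one]
    · rw [prod_eq, measure_inter_conull (hconull measurable_snd hsnd),
        hpre measurable_fst hfst B hB, inter_eq_left.2 hBI]
    · rw [prod_eq, inter_comm, measure_inter_conull (hconull measurable_fst hfst),
        hpre measurable_snd hsnd B hB, inter_eq_left.2 hBI]

lemma isDoublyStochastic_map_graph {T : ℝ → ℝ}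
    (hT : MeasurePreserving T (volume.restrict (Icc 0 1)) (volume.restrict (Icc 0 1))) :
    IsDoublyStochastic ((volume.restrict (Icc 0 1)).map fun x => (x, T x)) := by
  have hgraph : Measurable fun x => (x, T x) := measurable_id.prodMk hT.measurable
  rw [isDoublyStochastic_iff_map, Measure.map_map measurable_fst hgraph,
    Measure.map_map measurable_snd hgraph]
  exact ⟨Measure.map_id, hT.map_eq⟩

section Coupling

variable {β : ℝ}

lemma integral_sin_map_graph_reflectBelow (hβ : β ∈ Icc 0 1)
    (hβeq : sin (2 * π * β) - sin (π * β) = β * π * cos (π * β)) :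
    ∫ p, sin (π * (p.1 + p.2))
        ∂(volume.restrict (Icc (0:ℝ) 1)).map (fun x => (x, reflectBelow β x))
      = (∫ x in Icc 0 1, potential β x) + ∫ x in Icc 0 1, potential β x := by
  obtain ⟨hfst, hsnd⟩ := (isDoublyStochastic_iff_map _).1
    (isDoublyStochastic_map_graph (measurePreserving_reflectBelow hβ))
  have hslack : ∀ᵐ p ∂(volume.restrict (Icc (0:ℝ) 1)).map (fun x => (x, reflectBelow β x)),
      sin (π * (p.1 + p.2)) = potential β p.1 + potential β p.2 := by
    rw [ae_map_iff (by fun_prop) (measurableSet_eq_fun (by fun_prop) (by fun_prop))]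
    exact ae_restrict_of_forall_mem measurableSet_Icc fun x hx =>
      (potential_add_potential_reflectBelow hβeq hx.1).symm
  rw [integral_eq_integral_map_fst_add_integral_map_snd (by rw [hfst]; exact integrable_potential β)
    (by rw [hsnd]; exact integrable_potential β) hslack, hfst, hsnd]

lemma integral_sin_le_of_isDoublyStochastic (hβ : β ∈ Ioo 0 1)
    (hβeq : sin (2 * π * β) - sin (π * β) = β * π * cos (π * β)) {μ : Measure (ℝ × ℝ)}
    (hμ : IsDoublyStochastic μ) :
    ∫ p, sin (π * (p.1 + p.2)) ∂μ
      ≤ (∫ x in Icc 0 1, potential β x) + ∫ x in Icc 0 1, potential β x := by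
  obtain ⟨hfst, hsnd⟩ := (isDoublyStochastic_iff_map μ).1 hμ
  have : IsProbabilityMeasure μ := hμ.1
  have hsquare : ∀ᵐ p ∂μ, p.1 ∈ Icc (0:ℝ) 1 ∧ p.2 ∈ Icc (0:ℝ) 1 :=
    (ae_of_ae_map (by fun_prop) (hfst ▸ ae_restrict_mem measurableSet_Icc)).and
      (ae_of_ae_map (by fun_prop) (hsnd ▸ ae_restrict_mem measurableSet_Icc))
  have hle := integral_le_integral_map_fst_add_integral_map_snd
    (Integrable.of_bound (by fun_prop) 1 (ae_of_all _ fun p => abs_sin_le_one _))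
    (by rw [hfst]; exact integrable_potential β) (by rw [hsnd]; exact integrable_potential β)
    (hsquare.mono fun p hp => sin_pi_mul_add_le_potential_add hβ hβeq hp.1 hp.2)
  rwa [hfst, hsnd] at hle

end Coupling

theorem stmt18 (β : ℝ) (hβ : β ∈ Ioo (0:ℝ) 1)
    (hβeq : Real.sin (2 * π * β) - Real.sin (π * β) = β * π * Real.cos (π * β))
    (Γ : ℝ → ℝ)
    (hΓ1 : ∀ x, 0 ≤ x → x < β → Γ x = β - x)
    (hΓ2 : ∀ x, β ≤ x → x ≤ 1 → Γ x = x) :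
    IsDoublyStochastic
      (Measure.map (fun x => (x, Γ x)) (volume.restrict (Icc (0:ℝ) 1))) ∧
    (∀ μ : Measure (ℝ × ℝ), IsDoublyStochastic μ →
      ∫ p, Real.sin (π * (p.1 + p.2)) ∂μ ≤
        ∫ p, Real.sin (π * (p.1 + p.2))
          ∂(Measure.map (fun x => (x, Γ x)) (volume.restrict (Icc (0:ℝ) 1)))) ∧
    ∫ p, Real.sin (π * (p.1 + p.2))
        ∂(Measure.map (fun x => (x, Γ x)) (volume.restrict (Icc (0:ℝ) 1))) =
      ∫ x in (0:ℝ)..1, Real.sin (π * (x + Γ x)) := by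
  have hΓ : ∀ x ∈ Icc (0:ℝ) 1, Γ x = reflectBelow β x := fun x hx => by
    unfold reflectBelow
    split_ifs with h
    exacts [hΓ1 x hx.1 h, hΓ2 x (not_lt.1 h) hx.2]
  have hgraph : Measure.map (fun x => (x, Γ x)) (volume.restrict (Icc (0:ℝ) 1))
      = Measure.map (fun x => (x, reflectBelow β x)) (volume.restrict (Icc (0:ℝ) 1)) :=
    Measure.map_congr <| ae_restrict_of_forall_mem measurableSet_Icc fun x hx => by simp [hΓ x hx]
  rw [hgraph]
  refine ⟨isDoublyStochastic_map_graph (measurePreserving_reflectBelow (Ioo_subset_Icc_self hβ)),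
    fun μ hμ => ?_, ?_⟩
  · rw [integral_sin_map_graph_reflectBelow (Ioo_subset_Icc_self hβ) hβeq]
    exact integral_sin_le_of_isDoublyStochastic hβ hβeq hμ
  · rw [integral_map (by fun_prop) (by fun_prop), intervalIntegral.integral_of_le zero_le_one,
      ← integral_Icc_eq_integral_Ioc]
    exact setIntegral_congr_fun measurableSet_Icc fun x hx => by rw [hΓ x hx]
end
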